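/- Let A be a Q(q)-algebra and let x, y ∈ A satisfy the quantum Serre relation x² y − [2]_q x y x + y x² = 0, where [2]_q = q + q^{−1}. Then for each e ∈ {+1, −1} the higher-order (degree 3) Serre–Lusztig relation holds: ∑_{r+s=3} (−1)^r q^{−e r} x^{(r)} y x^{(s)} = 0, where x^{(k)} = x^k/[k]_q! is the usual divided power. -/

import Mathlib

noncomputable section

abbrev K : Type := RatFunc ℚ

/-- The indeterminate `q` in `ℚ(q)`. -/
def qq : K := RatFunc.X

/-- Balanced quantum integer at base `x`. -/
def qintx (x : K) (m : ℤ) : K := (x ^ m - x ^ (-m)) / (x - x⁻¹)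

/-- Balanced quantum integer `[m]_q`. -/
def qint (m : ℤ) : K := qintx qq m

/-- Quantum factorial at base `x`. -/
def qfactx (x : K) (m : ℕ) : K := ∏ j ∈ Finset.range m, qintx x ((j : ℤ) + 1)

/-- Quantum factorial `[m]_q!`. -/
def qfact (m : ℕ) : K := qfactx qq m

/-- Gaussian binomial coefficient at base `x` (zero when `r > m`). -/
def qbinomx (x : K) (m r : ℕ) : K :=
  if r ≤ m then qfactx x m / (qfactx x r * qfactx x (m - r)) else 0

/-- Gaussian binomial coefficient. -/
def qbinom (m r : ℕ) : K := qbinomx qq m r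

/-- The ı-divided powers `B^{(m)}_{p̄}` of `B` with central parameter `Z`,
given by the closed product formulas of the paper. -/
def iDP {A : Type*} [Ring A] [Algebra K A] (B Z : A) (p : ZMod 2) (m : ℕ) : A :=
  (qfact m)⁻¹ •
    ((if m % 2 = 1 then B else 1) *
      ((List.range (m / 2)).map (fun j =>
        B ^ 2 -
          ((qint (if p = 1 then 2 * (j : ℤ) + 1
                  else if m % 2 = 1 then 2 * (j : ℤ) + 2 else 2 * (j : ℤ))) ^ 2 * qq) • Z)).prod)

/-- The usual divided power `x^{(k)} = x^k/[k]_q!`. -/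
def dp {A : Type*} [Ring A] [Algebra K A] (x : A) (k : ℕ) : A := (qfact k)⁻¹ • x ^ k

/-
Modulo the Serre relation the cubic words `y x³` and `x³ y` reduce to `[2] x y x² - x² y x` and
`[2] x² y x - x y x²`, so the sum is a combination of `x y x²` and `x² y x`. With twist `t` its two
coefficients vanish by `t [3] = [2] + t³` and `t² [3] = 1 + t³ [2]`; since the quantum integers are
invariant under `t ↦ t⁻¹`, the twist `t⁻¹` (the case `e = 1`) follows.
-/

theorem qq_pow_ne_one {n : ℕ} (hn : n ≠ 0) : qq ^ n ≠ 1 := by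
  intro h
  rw [qq, ← RatFunc.algebraMap_X, ← map_pow, ← map_one (algebraMap (Polynomial ℚ) K)] at h
  simpa [hn] using congrArg Polynomial.natDegree (IsFractionRing.injective (Polynomial ℚ) K h)

section QuantumIntegers

variable {t : K}

theorem zpow_sub_zpow_neg_ne_zero (ht : t ≠ 0) {m : ℤ} (hm : t ^ (2 * m) ≠ 1) :
    t ^ m - t ^ (-m) ≠ 0 := by
  rw [sub_ne_zero]
  contrapose! hm
  rw [two_mul, zpow_add₀ ht]
  nth_rw 2 [hm]
  rw [← zpow_add₀ ht, add_neg_cancel, zpow_zero]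

theorem sub_inv_ne_zero_of_sq_ne_one (ht : t ≠ 0) (h1 : t ^ 2 ≠ 1) : t - t⁻¹ ≠ 0 := by
  simpa using zpow_sub_zpow_neg_ne_zero ht (m := 1) (by exact_mod_cast h1)

theorem qintx_ne_zero (ht : t ≠ 0) (h1 : t ^ 2 ≠ 1) {m : ℕ} (hm : t ^ (2 * m) ≠ 1) :
    qintx t m ≠ 0 :=
  div_ne_zero (zpow_sub_zpow_neg_ne_zero ht (by exact_mod_cast hm))
    (sub_inv_ne_zero_of_sq_ne_one ht h1)

theorem qintx_inv (t : K) (m : ℤ) : qintx t⁻¹ m = qintx t m := by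
  rw [qintx, qintx, inv_inv, inv_zpow', inv_zpow', neg_neg, ← neg_div_neg_eq, neg_sub, neg_sub]

theorem qintx_one (hden : t - t⁻¹ ≠ 0) : qintx t 1 = 1 := by
  simpa [qintx] using div_self hden

theorem qintx_two (hden : t - t⁻¹ ≠ 0) : qintx t 2 = t + t⁻¹ := by
  rw [qintx, div_eq_iff hden]
  simp only [zpow_neg, zpow_ofNat]
  ring

theorem qintx_three (hden : t - t⁻¹ ≠ 0) : qintx t 3 = t ^ 2 + 1 + t⁻¹ ^ 2 := by
  have ht : t ≠ 0 := by rintro rfl; simp at hden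
  rw [qintx, div_eq_iff hden]
  field_simp
  ring

@[simp]
theorem qfactx_zero (t : K) : qfactx t 0 = 1 := by
  simp [qfactx]

theorem qfactx_succ (t : K) (m : ℕ) : qfactx t (m + 1) = qfactx t m * qintx t (m + 1) := by
  simp [qfactx, Finset.prod_range_succ]

theorem qfactx_inv (t : K) (m : ℕ) : qfactx t⁻¹ m = qfactx t m := by
  simp only [qfactx, qintx_inv]

end QuantumIntegers

-- `dp = dpx qq` definitionally.
def dpx {A : Type*} [Ring A] [Algebra K A] (t : K) (x : A) (k : ℕ) : A := (qfactx t k)⁻¹ • x ^ k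

theorem dpx_inv {A : Type*} [Ring A] [Algebra K A] (t : K) (x : A) (k : ℕ) :
    dpx t⁻¹ x k = dpx t x k := by
  rw [dpx, dpx, qfactx_inv]

section SerreRelation

variable {R A : Type*} [CommRing R] [Ring A] [Algebra R A] {x y : A} {c : R}

theorem mul_pow_three_of_serre (h : x ^ 2 * y - c • (x * y * x) + y * x ^ 2 = 0) :
    y * x ^ 3 = c • (x * y * x ^ 2) - x ^ 2 * y * x := by
  rw [← sub_eq_zero]
  calc _ = (x ^ 2 * y - c • (x * y * x) + y * x ^ 2) * x := by
        simp only [add_mul, sub_mul, smul_mul_assoc]; noncomm_ring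
    _ = 0 := by rw [h, zero_mul]

theorem pow_three_mul_of_serre (h : x ^ 2 * y - c • (x * y * x) + y * x ^ 2 = 0) :
    x ^ 3 * y = c • (x ^ 2 * y * x) - x * y * x ^ 2 := by
  rw [← sub_eq_zero]
  calc _ = x * (x ^ 2 * y - c • (x * y * x) + y * x ^ 2) := by
        simp only [mul_add, mul_sub, mul_smul_comm]; noncomm_ring
    _ = 0 := by rw [h, mul_zero]

theorem smul_add_smul_add_smul_add_smul_eq_zero_of_serre
    (h : x ^ 2 * y - c • (x * y * x) + y * x ^ 2 = 0) {a₀ a₁ a₂ a₃ : R}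
    (hu : a₀ * c + a₁ - a₃ = 0) (hv : a₂ + a₃ * c - a₀ = 0) :
    a₀ • (y * x ^ 3) + a₁ • (x * y * x ^ 2) + a₂ • (x ^ 2 * y * x) + a₃ • (x ^ 3 * y) = 0 := by
  rw [mul_pow_three_of_serre h, pow_three_mul_of_serre h]
  linear_combination (norm := module) hu • (x * y * x ^ 2) + hv • (x ^ 2 * y * x)

end SerreRelation

section HigherSerre

variable {A : Type*} [Ring A] [Algebra K A] {t : K} {x y : A}

theorem sum_dpx_serre_three_eq_zero (hden : t - t⁻¹ ≠ 0) (h2 : qintx t 2 ≠ 0)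
    (h3 : qintx t 3 ≠ 0) (h : x ^ 2 * y - qintx t 2 • (x * y * x) + y * x ^ 2 = 0) :
    ∑ r ∈ Finset.range 4, ((-1 : K) ^ r * t ^ r) • (dpx t x r * y * dpx t x (3 - r)) = 0 := by
  have ht : t ≠ 0 := by rintro rfl; simp at hden
  have hf1 : qfactx t 1 = 1 := by simp [qfactx, qintx_one hden]
  have hf2 : qfactx t 2 = qintx t 2 := by rw [qfactx_succ, hf1, one_mul]; rfl
  have hf3 : qfactx t 3 = qintx t 2 * qintx t 3 := by rw [qfactx_succ, hf2]; rfl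
  simp only [Finset.sum_range_succ, Finset.sum_range_zero, zero_add, dpx, smul_mul_assoc,
    mul_smul_comm, smul_smul, Nat.reduceSub, pow_zero, pow_one, mul_one, one_mul]
  apply smul_add_smul_add_smul_add_smul_eq_zero_of_serre h
  all_goals
    simp only [qfactx_zero, hf1, hf2, hf3]
    field_simp
    rw [qintx_two hden, qintx_three hden]
    field_simp
    ring

theorem sum_dpx_serre_three_eq_zero_of_twist (hden : t - t⁻¹ ≠ 0) (h2 : qintx t 2 ≠ 0)
    (h3 : qintx t 3 ≠ 0) (h : x ^ 2 * y - qintx t 2 • (x * y * x) + y * x ^ 2 = 0) {s : K}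
    (hs : s = t ∨ s = t⁻¹) :
    ∑ r ∈ Finset.range 4, ((-1 : K) ^ r * s ^ r) • (dpx t x r * y * dpx t x (3 - r)) = 0 := by
  rcases hs with rfl | rfl
  · exact sum_dpx_serre_three_eq_zero hden h2 h3 h
  · simp only [← dpx_inv t]
    rw [← qintx_inv] at h h2 h3
    refine sum_dpx_serre_three_eq_zero ?_ h2 h3 h
    rwa [inv_inv, ← neg_sub, neg_ne_zero]

end HigherSerre

theorem stmt5 {A : Type*} [Ring A] [Algebra K A] (x y : A)
    (h : x ^ 2 * y - qint 2 • (x * y * x) + y * x ^ 2 = 0)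
    (e : ℤ) (he : e = 1 ∨ e = -1) :
    ∑ r ∈ Finset.range 4,
      ((-1 : K) ^ r * qq ^ (-(e * (r : ℤ)))) • (dp x r * y * dp x (3 - r)) = 0 := by
  have hq : qq ≠ 0 := RatFunc.X_ne_zero
  have hq2 : qq ^ 2 ≠ 1 := qq_pow_ne_one two_ne_zero
  have hden : qq - qq⁻¹ ≠ 0 := sub_inv_ne_zero_of_sq_ne_one hq hq2
  have htwist (r : ℕ) : qq ^ (-(e * (r : ℤ))) = (qq ^ (-e)) ^ r := by
    rw [← zpow_natCast, ← zpow_mul, neg_mul]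
  simp only [htwist]
  have h2 : qint 2 ≠ 0 := qintx_ne_zero hq hq2 (qq_pow_ne_one (by norm_num))
  have h3 : qint 3 ≠ 0 := qintx_ne_zero hq hq2 (qq_pow_ne_one (by norm_num))
  refine sum_dpx_serre_three_eq_zero_of_twist hden h2 h3 h ?_
  rcases he with rfl | rfl <;> simp
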